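/- For all integers n ≥ 14, the sum over k from 4 to ⌊(n-1)/2⌋ of 1/C(n,k) is at most 12(n-7)/(n(n-1)(n-2)(n-3)). -/

import Mathlib

open Finset

/-
Binomial coefficients increase up to the middle, so each of the terms `1 / C(n, k)` with
`4 ≤ k ≤ (n - 1) / 2` is at most `1 / C(n, 4) = 24 / (n (n - 1) (n - 2) (n - 3))`, and there are
at most `(n - 7) / 2` of them.
-/

theorem Nat.choose_le_choose_of_le_half_left {n a b : ℕ} (hab : a ≤ b) (hb : b ≤ n / 2) :
    n.choose a ≤ n.choose b := by
  induction b, hab using Nat.le_induction with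
  | base => rfl
  | succ b _ ih => exact (ih (by omega)).trans (Nat.choose_le_succ_of_lt_half_left (by omega))

theorem Nat.cast_choose_four (n : ℕ) :
    (n.choose 4 : ℝ) = n * (n - 1) * (n - 2) * (n - 3) / 24 := by
  rw [Nat.cast_choose_eq_descPochhammer_div]
  simp [descPochhammer_succ_right, Nat.factorial]

theorem sum_Icc_one_div_choose_le (n a : ℕ) (ha : a ≤ n) :
    ∑ k ∈ Icc a ((n - 1) / 2), (1 : ℝ) / n.choose k ≤
      ((n - 1) / 2 + 1 - a : ℕ) / n.choose a := by
  have hpos : (0 : ℝ) < n.choose a := by exact_mod_cast Nat.choose_pos ha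
  have hterm : ∀ k ∈ Icc a ((n - 1) / 2), (1 : ℝ) / n.choose k ≤ 1 / n.choose a := by
    intro k hk
    rw [mem_Icc] at hk
    gcongr
    exact Nat.choose_le_choose_of_le_half_left hk.1 (by omega)
  calc ∑ k ∈ Icc a ((n - 1) / 2), (1 : ℝ) / n.choose k
      ≤ #(Icc a ((n - 1) / 2)) • (1 / (n.choose a : ℝ)) := sum_le_card_nsmul _ _ _ hterm
    _ = ((n - 1) / 2 + 1 - a : ℕ) / n.choose a := by rw [Nat.card_Icc, nsmul_eq_mul, mul_one_div]

theorem stmt_0 (n : ℕ) (hn : 14 ≤ n) :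
    ∑ k ∈ Finset.Icc 4 ((n - 1) / 2), (1 : ℝ) / (n.choose k) ≤
      12 * ((n : ℝ) - 7) / ((n : ℝ) * ((n : ℝ) - 1) * ((n : ℝ) - 2) * ((n : ℝ) - 3)) := by
  have hn' : (14 : ℝ) ≤ n := by exact_mod_cast hn
  have hcount : (((n - 1) / 2 + 1 - 4 : ℕ) : ℝ) ≤ ((n : ℝ) - 7) / 2 := by
    have : ((n - 1) / 2 + 1 - 4) * 2 + 7 ≤ n := by omega
    have : (((n - 1) / 2 + 1 - 4 : ℕ) : ℝ) * 2 + 7 ≤ n := by exact_mod_cast this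
    linarith
  have hprod : (n : ℝ) * (n - 1) * (n - 2) * (n - 3) ≠ 0 := by
    refine (mul_pos (mul_pos (mul_pos ?_ ?_) ?_) ?_).ne' <;> linarith
  calc ∑ k ∈ Icc 4 ((n - 1) / 2), (1 : ℝ) / n.choose k
      ≤ ((n - 1) / 2 + 1 - 4 : ℕ) / n.choose 4 := sum_Icc_one_div_choose_le n 4 (by omega)
    _ ≤ ((n : ℝ) - 7) / 2 / n.choose 4 := by gcongr
    _ = 12 * ((n : ℝ) - 7) / (n * (n - 1) * (n - 2) * (n - 3)) := by
      rw [Nat.cast_choose_four]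
      field_simp
      ring
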